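/- The implicit embedded method of IMEX-NPRK2[42]b is A-stable but not L-stable: with A = [[γ,0],[(−20+23√2)/42,γ]], γ = 1 − √2/2, and embedded weights b̂ = (1/15, 14/15), for every z ∈ ℂ with Re z ≤ 0 the matrix I − zA is invertible and the embedded stability function R̂(z) = 1 + z·b̂ᵀ(I − zA)⁻¹𝟙 satisfies |R̂(z)| ≤ 1; moreover b̂ᵀA⁻¹𝟙 ≠ 1, so R̂(z) does not tend to 0 as |z| → ∞. -/

import Mathlib

/-!
The matrix `!![g, 0; a, g]` is a two-stage SDIRK matrix; for weights with `b₁ + b₂ = 1` its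
stability function is `(1 + p z + c z²) / (1 - g z)²` with `p = 1 - 2g` and `c = g² - g + b₂ a`,
and for the embedded weights `c = (5 + √2) / 90 > 0`. For `Re z ≤ 0`, `|1 - g z|⁴ - |1 + p z + c z²|²`
is a combination of `|z|²`, `|z|⁴`, `-Re z`, `(Re z)²` and `-|z|² Re z` whose coefficients are
nonnegative for these `g, p, c`; this is A-stability. As `|z| → ∞` the stability function tends
to `c / g² = 1 - b̂ᵀA⁻¹𝟙 ≠ 0`.
-/

open Matrix Filter Topology Bornology

namespace RungeKutta

noncomputable def stabilityFunction {K : Type*} [Field K] {s : ℕ}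
    (A : Matrix (Fin s) (Fin s) K) (b : Fin s → K) (z : K) : K :=
  1 + z * (b ⬝ᵥ ((1 - z • A)⁻¹ *ᵥ 1))

section SDIRK

variable {K : Type*} [Field K]

lemma inv_mulVec_one_lowerTriangular_fin_two {d : K} (e : K) (hd : d ≠ 0) :
    (!![d, 0; e, d])⁻¹ *ᵥ 1 = ![d⁻¹, (d - e) / d ^ 2] := by
  have hdet : IsUnit (!![d, 0; e, d]).det := by simp [det_fin_two_of, hd]
  have hsol : !![d, 0; e, d] *ᵥ ![d⁻¹, (d - e) / d ^ 2] = 1 := by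
    ext i; fin_cases i
    · simp [hd]
    · simp; field_simp; ring
  rw [← hsol, mulVec_mulVec, nonsing_inv_mul _ hdet, one_mulVec]

lemma one_sub_smul_sdirk2 (g a z : K) :
    1 - z • !![g, 0; a, g] = !![1 - z * g, 0; -(z * a), 1 - z * g] := by
  ext i j; fin_cases i <;> fin_cases j <;> simp

lemma isUnit_one_sub_smul_sdirk2 {g z : K} (a : K) (hz : 1 - z * g ≠ 0) :
    IsUnit (1 - z • !![g, 0; a, g]) := by
  rw [isUnit_iff_isUnit_det, one_sub_smul_sdirk2]
  simp [det_fin_two_of, hz]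

variable {g b₁ b₂ : K}

lemma stabilityFunction_sdirk2 (a : K) {z : K} (hb : b₁ + b₂ = 1) (hz : 1 - z * g ≠ 0) :
    stabilityFunction !![g, 0; a, g] ![b₁, b₂] z
      = (1 + (1 - 2 * g) * z + (g ^ 2 - g + b₂ * a) * z ^ 2) / (1 - z * g) ^ 2 := by
  rw [stabilityFunction, one_sub_smul_sdirk2, inv_mulVec_one_lowerTriangular_fin_two _ hz,
    vec2_dotProduct']
  field_simp
  linear_combination (1 - z * g) * z * hb

lemma dotProduct_inv_mulVec_one_sdirk2 (a : K) (hb : b₁ + b₂ = 1) (hg : g ≠ 0) :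
    ![b₁, b₂] ⬝ᵥ (!![g, 0; a, g]⁻¹ *ᵥ 1) = 1 - (g ^ 2 - g + b₂ * a) / g ^ 2 := by
  rw [inv_mulVec_one_lowerTriangular_fin_two _ hg, vec2_dotProduct']
  field_simp
  linear_combination g * hb

end SDIRK

lemma one_sub_mul_ofReal_ne_zero {g : ℝ} (hg : 0 ≤ g) {z : ℂ} (hz : z.re ≤ 0) :
    1 - z * g ≠ 0 := by
  intro h
  have := congrArg Complex.re h
  simp only [Complex.sub_re, Complex.one_re, Complex.mul_re, Complex.ofReal_re,
    Complex.ofReal_im, mul_zero, sub_zero, Complex.zero_re] at this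
  nlinarith

lemma norm_sq_sub_norm_sq_quadratic_eq (g p c : ℝ) (z : ℂ) :
    ‖(1 - z * g) ^ 2‖ ^ 2 - ‖1 + p * z + c * z ^ 2‖ ^ 2
      = (2 * (g ^ 2 + c) - p ^ 2) * ‖z‖ ^ 2 + (g ^ 4 - c ^ 2) * ‖z‖ ^ 4
        + 2 * (p + 2 * g) * (-z.re) + 4 * (g ^ 2 - c) * z.re ^ 2
        + 2 * (p * c + 2 * g ^ 3) * ‖z‖ ^ 2 * (-z.re) := by
  rw [show ‖z‖ ^ 4 = (‖z‖ ^ 2) ^ 2 by ring]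
  simp only [Complex.sq_norm]
  simp only [Complex.normSq_apply, pow_two, Complex.add_re, Complex.add_im,
    Complex.sub_re, Complex.sub_im, Complex.mul_re, Complex.mul_im, Complex.one_re,
    Complex.one_im, Complex.ofReal_re, Complex.ofReal_im]
  ring

lemma norm_quadratic_div_sq_le_one {g p c : ℝ} (hp : 0 ≤ p + 2 * g)
    (hpc : 0 ≤ p * c + 2 * g ^ 3) (hc : |c| ≤ g ^ 2) (hp_sq : p ^ 2 ≤ 2 * (g ^ 2 + c))
    {z : ℂ} (hz : z.re ≤ 0) :
    ‖(1 + p * z + c * z ^ 2) / (1 - z * g) ^ 2‖ ≤ 1 := by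
  rw [norm_div]
  refine div_le_one_of_le₀ ?_ (norm_nonneg _)
  rw [← pow_le_pow_iff_left₀ (norm_nonneg _) (norm_nonneg _) two_ne_zero, ← sub_nonneg,
    norm_sq_sub_norm_sq_quadratic_eq]
  obtain ⟨hc₁, hc₂⟩ := abs_le.mp hc
  have : 0 ≤ g ^ 4 - c ^ 2 := by nlinarith
  have : 0 ≤ -z.re := neg_nonneg.mpr hz
  positivity

lemma tendsto_quadratic_div_sq_cobounded (p c : ℂ) {g : ℂ} (hg : g ≠ 0) :
    Tendsto (fun z => (1 + p * z + c * z ^ 2) / (1 - z * g) ^ 2) (cobounded ℂ)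
      (𝓝 (c / g ^ 2)) := by
  have hcont : ContinuousAt (fun w : ℂ => (w ^ 2 + p * w + c) / (w - g) ^ 2) 0 := by
    fun_prop (disch := simpa using hg)
  have hlim := hcont.tendsto.comp tendsto_inv₀_cobounded
  rw [show (0 : ℂ) ^ 2 + p * 0 + c = c by ring, zero_sub, neg_sq] at hlim
  refine hlim.congr' ?_
  filter_upwards [eventually_ne_cobounded 0, eventually_ne_cobounded g⁻¹] with z hz hzg
  have hzg' : z⁻¹ - g ≠ 0 := sub_ne_zero.mpr fun h => hzg (by rw [← h, inv_inv])
  simp only [Function.comp_apply]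
  field_simp

lemma norm_stabilityFunction_sdirk2_le_one {g a b₁ b₂ : ℝ} (hb : b₁ + b₂ = 1) (hg : 0 ≤ g)
    (hpc : 0 ≤ (1 - 2 * g) * (g ^ 2 - g + b₂ * a) + 2 * g ^ 3)
    (hc : |g ^ 2 - g + b₂ * a| ≤ g ^ 2) (hab : 1 ≤ 2 * (g + b₂ * a)) {z : ℂ} (hz : z.re ≤ 0) :
    ‖stabilityFunction !![(g : ℂ), 0; (a : ℂ), g] ![(b₁ : ℂ), b₂] z‖ ≤ 1 := by
  rw [stabilityFunction_sdirk2 _ (by exact_mod_cast hb) (one_sub_mul_ofReal_ne_zero hg hz)]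
  exact_mod_cast norm_quadratic_div_sq_le_one (by linarith) hpc hc (by nlinarith) hz

lemma tendsto_stabilityFunction_sdirk2_cobounded {g b₁ b₂ : ℂ} (a : ℂ) (hb : b₁ + b₂ = 1)
    (hg : g ≠ 0) :
    Tendsto (stabilityFunction !![g, 0; a, g] ![b₁, b₂]) (cobounded ℂ)
      (𝓝 ((g ^ 2 - g + b₂ * a) / g ^ 2)) := by
  refine (tendsto_quadratic_div_sq_cobounded (1 - 2 * g) _ hg).congr' ?_
  filter_upwards [eventually_ne_cobounded g⁻¹] with z hz
  have hz' : 1 - z * g ≠ 0 := sub_ne_zero.mpr fun h => hz (eq_inv_of_mul_eq_one_left h.symm)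
  exact (stabilityFunction_sdirk2 a hb hz').symm

end RungeKutta

open RungeKutta

theorem stmt_15 :
    let g : ℝ := 1 - Real.sqrt 2 / 2
    let A : Matrix (Fin 2) (Fin 2) ℝ := !![g, 0; (-20 + 23*Real.sqrt 2)/42, g]
    let bhat : Fin 2 → ℝ := ![1/15, 14/15]
    let AC : Matrix (Fin 2) (Fin 2) ℂ := A.map Complex.ofReal
    let bC : Fin 2 → ℂ := fun i => (bhat i : ℂ)
    let Rhat : ℂ → ℂ := fun z => 1 + z * (bC ⬝ᵥ ((1 - z • AC)⁻¹ *ᵥ 1))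
    (∀ z : ℂ, z.re ≤ 0 → IsUnit (1 - z • AC) ∧ ‖Rhat z‖ ≤ 1) ∧
      bhat ⬝ᵥ (A⁻¹ *ᵥ 1) ≠ 1 ∧
      ¬ Filter.Tendsto Rhat (Filter.comap (fun w : ℂ => ‖w‖) Filter.atTop) (nhds 0) := by
  intro g A bhat AC bC Rhat
  set a : ℝ := (-20 + 23 * √2) / 42 with ha
  have hs : √2 ^ 2 = 2 := Real.sq_sqrt zero_le_two
  have hs₁ : 1 < √2 := Real.one_lt_sqrt_two
  have hs₂ : √2 < 1.42 := by nlinarith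
  have hg_def : g = 1 - √2 / 2 := rfl
  have hg : 0 < g := by linarith
  have hc : g ^ 2 - g + 14 / 15 * a = (5 + √2) / 90 := by
    rw [hg_def, ha]; linear_combination hs / 4
  have hR_inf : (g ^ 2 - g + 14 / 15 * a) / g ^ 2 ≠ 0 := by rw [hc]; positivity
  have hAC : AC = !![(g : ℂ), 0; (a : ℂ), g] := by
    ext i j; fin_cases i <;> fin_cases j <;> rfl
  have hR : Rhat = stabilityFunction AC ![((1 / 15 : ℝ) : ℂ), ((14 / 15 : ℝ) : ℂ)] := by
    change stabilityFunction AC bC = _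
    congr; ext i; fin_cases i <;> rfl
  refine ⟨fun z hz => ⟨?_, ?_⟩, ?_, ?_⟩
  · rw [hAC]
    exact isUnit_one_sub_smul_sdirk2 _ (one_sub_mul_ofReal_ne_zero hg.le hz)
  · rw [hR, hAC]
    refine norm_stabilityFunction_sdirk2_le_one (by norm_num) hg.le ?_ ?_ (by linarith) hz
    · have : 0 ≤ 1 - 2 * g := by linarith
      rw [hc]; positivity
    · rw [hc, abs_of_pos (by positivity)]; nlinarith
  · change ![1 / 15, 14 / 15] ⬝ᵥ (!![g, 0; a, g]⁻¹ *ᵥ 1) ≠ 1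
    rw [dotProduct_inv_mulVec_one_sdirk2 _ (by norm_num) hg.ne']
    exact sub_eq_self.not.mpr hR_inf
  · rw [comap_norm_atTop, hR, hAC]
    intro h0
    have hlim := tendsto_nhds_unique
      (tendsto_stabilityFunction_sdirk2_cobounded _ (by norm_num) (by exact_mod_cast hg.ne')) h0
    exact hR_inf (by exact_mod_cast hlim)
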